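/- In the LDA model, the centered second moment M_2 := E[x_1 ⊗ x_2] − (α_0/(α_0+1)) E[x_1] ⊗ E[x_1] decomposes as M_2 = ∑_{i=1}^k (α_i/(α_0(α_0+1))) μ_i ⊗ μ_i. -/

import Mathlib

open Finset

/-! Writing `S_a = ∑ i, α i * μ i a`, the Dirichlet moment gives
`E[x₁ ⊗ x₂] = (S_a S_b + ∑ i, α i μ_i a μ_i b) / (α₀(α₀+1))`, while
`(α₀/(α₀+1)) E[x₁] ⊗ E[x₁] = S_a S_b / (α₀(α₀+1))`; the rank-one parts cancel. -/

section
variable {ι K : Type*} [Fintype ι] [Field K]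

theorem sum_sum_dirichlet_moment_mul [DecidableEq ι] (α u v : ι → K) (c : K) :
    ∑ i, ∑ j, ((α i * α j + if i = j then α i else 0) / c) * (u i * v j)
      = ((∑ i, α i * u i) * (∑ j, α j * v j) + ∑ i, α i * (u i * v i)) / c := by
  simp only [add_div, add_mul, sum_add_distrib, ite_div, zero_div, ite_mul, zero_mul,
    sum_ite_eq, mem_univ, if_true, sum_mul_sum, sum_div]
  congr 1
  · exact sum_congr rfl fun i _ ↦ sum_congr rfl fun j _ ↦ by ring
  · exact sum_congr rfl fun i _ ↦ by ring

theorem sum_div_mul_eq_sum_mul_div (α u : ι → K) (c : K) :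
    ∑ i, α i / c * u i = (∑ i, α i * u i) / c := by
  simp only [div_mul_eq_mul_div, sum_div]

end

-- Holds for every `a`: at `a = 0` and `a = -1` both sides are `0` by the convention `x / 0 = 0`.
theorem div_add_one_mul_div_mul_div {K : Type*} [Field K] (a s t : K) :
    a / (a + 1) * (s / a * (t / a)) = s * t / (a * (a + 1)) := by
  rcases eq_or_ne a 0 with rfl | ha
  · simp
  rcases eq_or_ne (a + 1) 0 with ha₁ | ha₁
  · simp [ha₁]
  field_simp

theorem lda_second_moment_decomposition_general {k d : ℕ}
    (α : Fin k → ℝ) (α₀ : ℝ)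
    (μ : Fin k → Fin d → ℝ)
    (Ex1 : Fin d → ℝ) (hEx1 : ∀ a, Ex1 a = ∑ i, (α i / α₀) * μ i a)
    (Ex1x2 : Fin d → Fin d → ℝ)
    (hEx1x2 : ∀ a b, Ex1x2 a b = ∑ i, ∑ j,
      ((α i * α j + if i = j then α i else 0) / (α₀ * (α₀ + 1))) * (μ i a * μ j b)) :
    ∀ a b, Ex1x2 a b - (α₀ / (α₀ + 1)) * (Ex1 a * Ex1 b)
      = ∑ i, (α i / (α₀ * (α₀ + 1))) * (μ i a * μ i b) := by
  intro a b
  rw [hEx1x2, hEx1, hEx1, sum_sum_dirichlet_moment_mul, sum_div_mul_eq_sum_mul_div,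
    sum_div_mul_eq_sum_mul_div, div_add_one_mul_div_mul_div, add_div, add_sub_cancel_left,
    sum_div_mul_eq_sum_mul_div]

/-- In the LDA model, the centered second moment
`M₂ := E[x₁ ⊗ x₂] − (α₀/(α₀+1)) E[x₁] ⊗ E[x₁]` decomposes as
`M₂ = ∑ i, (α_i/(α₀(α₀+1))) μ_i ⊗ μ_i`.
Here `E[x₁] = ∑ i (α_i/α₀) μ_i` and
`E[x₁ ⊗ x₂] = ∑_{i,j} E[θ_i θ_j] μ_i ⊗ μ_j` with the Dirichlet second moment
`E[θ_i θ_j] = (α_i α_j + 1_{i=j} α_i)/(α₀(α₀+1))`. -/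
theorem lda_second_moment_decomposition {k d : ℕ}
    (α : Fin k → ℝ) (hα : ∀ i, 0 < α i) (α₀ : ℝ) (hα₀ : α₀ = ∑ i, α i)
    (μ : Fin k → Fin d → ℝ)
    (Ex1 : Fin d → ℝ) (hEx1 : ∀ a, Ex1 a = ∑ i, (α i / α₀) * μ i a)
    (Ex1x2 : Fin d → Fin d → ℝ)
    (hEx1x2 : ∀ a b, Ex1x2 a b = ∑ i, ∑ j,
      ((α i * α j + if i = j then α i else 0) / (α₀ * (α₀ + 1))) * (μ i a * μ j b)) :
    ∀ a b, Ex1x2 a b - (α₀ / (α₀ + 1)) * (Ex1 a * Ex1 b)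
      = ∑ i, (α i / (α₀ * (α₀ + 1))) * (μ i a * μ i b) :=
  lda_second_moment_decomposition_general α α₀ μ Ex1 hEx1 Ex1x2 hEx1x2
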